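/- arXiv:1905.05853 — 4 statements merged into one kernel-verified Lean document; each statement's English description precedes it below -/
import Mathlib

section
/- Let V be a real separable Hilbert space, let N, m, s be positive integers, and let A be an m×N real matrix satisfying (1−δ)‖x‖₂² ≤ ‖Ax‖₂² ≤ (1+δ)‖x‖₂² for all s-sparse x ∈ ℝ^N, where 0 ≤ δ < 1. Then the same two-sided bound holds for Hilbert-valued vectors: for every z ∈ V^N with at most s nonzero components, (1−δ)‖z‖²_{V,2} ≤ ‖Az‖²_{V,2} ≤ (1+δ)‖z‖²_{V,2}. -/
open scoped BigOperators
open Filter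

variable {V : Type*}

noncomputable def mnorm1 [NormedAddCommGroup V] {N : ℕ} (z : Fin N → V) : ℝ := ∑ j, ‖z j‖

noncomputable def mnorm2 [NormedAddCommGroup V] {N : ℕ} (z : Fin N → V) : ℝ :=
  Real.sqrt (∑ j, ‖z j‖ ^ 2)

def matVec [NormedAddCommGroup V] [Module ℝ V] {m N : ℕ}
    (A : Matrix (Fin m) (Fin N) ℝ) (z : Fin N → V) : Fin m → V :=
  fun i => ∑ j, A i j • z j

def matVecT [NormedAddCommGroup V] [Module ℝ V] {m N : ℕ}
    (A : Matrix (Fin m) (Fin N) ℝ) (v : Fin m → V) : Fin N → V :=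
  fun j => ∑ i, A i j • v i

def IsSparse [Zero V] {N : ℕ} (s : ℕ) (z : Fin N → V) : Prop :=
  ∃ S : Finset (Fin N), S.card ≤ s ∧ ∀ j ∉ S, z j = 0

def restrict [Zero V] {N : ℕ} (S : Finset (Fin N)) (z : Fin N → V) : Fin N → V :=
  fun j => if j ∈ S then z j else 0

noncomputable def softThresh [NormedAddCommGroup V] [Module ℝ V] (τ : ℝ) (x : V) : V :=
  (max (‖x‖ - τ) 0 / ‖x‖) • x

noncomputable def Sop [NormedAddCommGroup V] [Module ℝ V] {m N : ℕ}
    (τ : ℝ) (A : Matrix (Fin m) (Fin N) ℝ) (u : Fin m → V) (z : Fin N → V) : Fin N → V :=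
  fun j => softThresh τ ((z - τ • matVecT A (matVec A z - u)) j)

noncomputable def specNorm {N : ℕ} (M : Matrix (Fin N) (Fin N) ℝ) : ℝ :=
  ‖(Matrix.toEuclideanCLM (𝕜 := ℝ) M : EuclideanSpace ℝ (Fin N) →L[ℝ] EuclideanSpace ℝ (Fin N))‖

/-!
Expand the components of `z` in an orthonormal basis `(e k)` of the finite-dimensional span of
`z 0, …, z (N-1)`. Taking the coordinate `⟪e k, ·⟫` commutes with `A`, so by Parseval both
`mnorm2 z ^ 2` and `mnorm2 (matVec A z) ^ 2` are sums over `k` of the squared Euclidean norms of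
the real vectors `x k = (⟪e k, z j⟫)ⱼ` and `A x k`. Each `x k` vanishes wherever `z` does, hence is
`s`-sparse, and summing the real RIP over `k` gives both bounds.
-/

open scoped RealInnerProductSpace

theorem IsSparse.comp {W : Type*} [Zero V] [Zero W] {N s : ℕ} {z : Fin N → V}
    (hz : IsSparse s z) {f : V → W} (hf : f 0 = 0) : IsSparse s (f ∘ z) := by
  obtain ⟨S, hS, hzero⟩ := hz
  exact ⟨S, hS, fun j hj => by simp [hzero j hj, hf]⟩

theorem sq_mnorm2 [NormedAddCommGroup V] {N : ℕ} (z : Fin N → V) :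
    mnorm2 z ^ 2 = ∑ j, ‖z j‖ ^ 2 :=
  Real.sq_sqrt (by positivity)

theorem matVec_mem_span [NormedAddCommGroup V] [Module ℝ V] {m N : ℕ}
    (A : Matrix (Fin m) (Fin N) ℝ) (z : Fin N → V) (i : Fin m) :
    matVec A z i ∈ Submodule.span ℝ (Set.range z) :=
  Submodule.sum_mem _ fun j _ => Submodule.smul_mem _ _ (Submodule.subset_span ⟨j, rfl⟩)

theorem inner_matVec [NormedAddCommGroup V] [InnerProductSpace ℝ V] {m N : ℕ}
    (A : Matrix (Fin m) (Fin N) ℝ) (z : Fin N → V) (u : V) (i : Fin m) :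
    ⟪u, matVec A z i⟫ = ∑ j, A i j * ⟪u, z j⟫ := by
  simp only [matVec, inner_sum, real_inner_smul_right]

theorem OrthonormalBasis.sq_mnorm2_eq_sum_inner_sq [NormedAddCommGroup V]
    [InnerProductSpace ℝ V] {ι : Type*} [Fintype ι] {W : Submodule ℝ V}
    (b : OrthonormalBasis ι ℝ W) {n : ℕ} {y : Fin n → V} (hy : ∀ j, y j ∈ W) :
    mnorm2 y ^ 2 = ∑ k, ∑ j, ⟪(b k : V), y j⟫ ^ 2 := by
  rw [sq_mnorm2, Finset.sum_comm]
  exact Finset.sum_congr rfl fun j _ => (b.sum_sq_inner_right ⟨y j, hy j⟩).symm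

theorem rip_extends_to_hilbert_valued_general
    [NormedAddCommGroup V] [InnerProductSpace ℝ V]
    {N m s : ℕ}
    (A : Matrix (Fin m) (Fin N) ℝ) (δ : ℝ)
    (hRIP : ∀ x : Fin N → ℝ, IsSparse s x →
      (1 - δ) * (∑ j, x j ^ 2) ≤ ∑ i, (∑ j, A i j * x j) ^ 2 ∧
        ∑ i, (∑ j, A i j * x j) ^ 2 ≤ (1 + δ) * (∑ j, x j ^ 2))
    (z : Fin N → V) (hz : IsSparse s z) :
    (1 - δ) * mnorm2 z ^ 2 ≤ mnorm2 (matVec A z) ^ 2 ∧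
      mnorm2 (matVec A z) ^ 2 ≤ (1 + δ) * mnorm2 z ^ 2 := by
  have : FiniteDimensional ℝ (Submodule.span ℝ (Set.range z)) :=
    FiniteDimensional.span_of_finite ℝ (Set.finite_range z)
  let b := stdOrthonormalBasis ℝ (Submodule.span ℝ (Set.range z))
  have hcoord (k) : IsSparse s fun j => ⟪(b k : V), z j⟫ := hz.comp (inner_zero_right _)
  rw [b.sq_mnorm2_eq_sum_inner_sq (fun j => Submodule.subset_span ⟨j, rfl⟩),
    b.sq_mnorm2_eq_sum_inner_sq (matVec_mem_span A z)]
  simp only [inner_matVec]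
  rw [Finset.mul_sum, Finset.mul_sum]
  exact ⟨Finset.sum_le_sum fun k _ => (hRIP _ (hcoord k)).1,
    Finset.sum_le_sum fun k _ => (hRIP _ (hcoord k)).2⟩

/-- the RIP for `s`-sparse real vectors extends to `s`-sparse Hilbert-valued
vectors with the same constant. -/
theorem rip_extends_to_hilbert_valued
    [NormedAddCommGroup V] [InnerProductSpace ℝ V] [CompleteSpace V]
    [TopologicalSpace.SeparableSpace V]
    {N m s : ℕ} (hN : 0 < N) (hm : 0 < m) (hs : 0 < s)
    (A : Matrix (Fin m) (Fin N) ℝ) (δ : ℝ) (hδ0 : 0 ≤ δ) (hδ1 : δ < 1)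
    (hRIP : ∀ x : Fin N → ℝ, IsSparse s x →
      (1 - δ) * (∑ j, x j ^ 2) ≤ ∑ i, (∑ j, A i j * x j) ^ 2 ∧
        ∑ i, (∑ j, A i j * x j) ^ 2 ≤ (1 + δ) * (∑ j, x j ^ 2))
    (z : Fin N → V) (hz : IsSparse s z) :
    (1 - δ) * mnorm2 z ^ 2 ≤ mnorm2 (matVec A z) ^ 2 ∧
      mnorm2 (matVec A z) ^ 2 ≤ (1 + δ) * mnorm2 z ^ 2 :=
  rip_extends_to_hilbert_valued_general A δ hRIP z hz
end

section
/- Let V be a real separable Hilbert space, let N, m, s be positive integers, and let A be an m×N real matrix satisfying the ℓ_{V,2}-robust null space property of order s with constants ρ ∈ (0,1) and τ > 0. Then for all c, z ∈ V^N, ‖z − c‖_{V,2} ≤ (C/√s)(‖z‖_{V,1} − ‖c‖_{V,1} + 2σ_s(c)_{V,1}) + D‖A(z − c)‖_{V,2}, where C = (1+ρ)²/(1−ρ) and D = (3+ρ)τ/(1−ρ). -/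
open scoped BigOperators
open Filter

variable {V : Type*}

/-- Best `s`-term approximation error of `c` in the `‖·‖_{V,1}` norm. -/
noncomputable def sigmaS [NormedAddCommGroup V] {N : ℕ} (s : ℕ) (c : Fin N → V) : ℝ :=
  sInf ((fun w => mnorm1 (c - w)) '' {w : Fin N → V | IsSparse s w})

/-- The `ℓ_{V,2}`-robust null space property of order `s` with constants `ρ` and `τ`. -/
def RobustNSP (V : Type*) [NormedAddCommGroup V] [InnerProductSpace ℝ V] {m N : ℕ}
    (A : Matrix (Fin m) (Fin N) ℝ) (s : ℕ) (ρ τ : ℝ) : Prop :=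
  ∀ (z : Fin N → V) (S : Finset (Fin N)), S.card ≤ s →
    mnorm2 (restrict S z) ≤ ρ / Real.sqrt s * mnorm1 (restrict Sᶜ z) + τ * mnorm2 (matVec A z)

/-! Write `v = z - c` and let `S` be the support of an `s`-sparse `w`. The null space property
multiplied by `√s`, together with Cauchy–Schwarz `‖v_S‖₁ ≤ √s ‖v_S‖₂`, gives an `ℓ₁` form of the
property; combined with the cone inequality
`‖v_{Sᶜ}‖₁ ≤ ‖z‖₁ - ‖c‖₁ + 2 ‖c_{Sᶜ}‖₁ + ‖v_S‖₁` it bounds `(1 - ρ) ‖v‖₁`. Applying the property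
instead to the set `T` of the `s` largest entries of `v`, Stechkin's estimate
`√s ‖v_{Tᶜ}‖₂ ≤ ‖v‖₁` bounds `√s ‖v‖₂` by `(1 + ρ) ‖v‖₁`. Chaining the two bounds and then taking
the infimum over `w` (since `‖c_{Sᶜ}‖₁ ≤ ‖c - w‖₁`) yields the constants `(1 + ρ)² / (1 - ρ)` and
`(3 + ρ) τ / (1 - ρ)`.
-/

theorem Finset.exists_card_eq_forall_notMem_le {ι α : Type*} [Fintype ι] [LinearOrder α]
    (f : ι → α) {k : ℕ} (hk : k ≤ Fintype.card ι) :
    ∃ T : Finset ι, T.card = k ∧ ∀ i ∈ T, ∀ j ∉ T, f j ≤ f i := by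
  classical
  induction k with
  | zero => exact ⟨∅, rfl, by simp⟩
  | succ k ih =>
    obtain ⟨T, hcard, htop⟩ := ih (by omega)
    have hne : Tᶜ.Nonempty := by rw [← Finset.card_pos, Finset.card_compl]; omega
    obtain ⟨i₀, hi₀, hmax⟩ := Finset.exists_max_image Tᶜ f hne
    rw [Finset.mem_compl] at hi₀
    refine ⟨insert i₀ T, by rw [Finset.card_insert_of_notMem hi₀, hcard], ?_⟩
    intro i hi j hj
    rw [Finset.mem_insert, not_or] at hj
    rcases Finset.mem_insert.mp hi with rfl | hiT
    · exact hmax j (Finset.mem_compl.mpr hj.2)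
    · exact htop i hiT j hj.2

section MixedNorms

variable [NormedAddCommGroup V] {N : ℕ}

lemma mnorm1_nonneg (v : Fin N → V) : 0 ≤ mnorm1 v :=
  Finset.sum_nonneg fun _ _ => norm_nonneg _

lemma mnorm2_nonneg (v : Fin N → V) : 0 ≤ mnorm2 v :=
  Real.sqrt_nonneg _

lemma mnorm2_eq_norm_toLp (v : Fin N → V) :
    mnorm2 v = ‖WithLp.toLp 2 v‖ :=
  (PiLp.norm_eq_of_L2 _).symm

lemma mnorm2_add_le (x y : Fin N → V) : mnorm2 (x + y) ≤ mnorm2 x + mnorm2 y := by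
  simpa only [mnorm2_eq_norm_toLp, WithLp.toLp_add] using norm_add_le _ _

lemma mnorm1_restrict (S : Finset (Fin N)) (v : Fin N → V) :
    mnorm1 (restrict S v) = ∑ j ∈ S, ‖v j‖ := by
  simp [mnorm1, restrict, apply_ite norm, Finset.sum_ite_mem]

lemma mnorm2_restrict (S : Finset (Fin N)) (v : Fin N → V) :
    mnorm2 (restrict S v) = √(∑ j ∈ S, ‖v j‖ ^ 2) := by
  simp [mnorm2, restrict, apply_ite norm, Finset.sum_ite_mem]

lemma restrict_add_restrict_compl (S : Finset (Fin N)) (v : Fin N → V) :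
    restrict S v + restrict Sᶜ v = v := by
  ext j; by_cases hj : j ∈ S <;> simp [restrict, hj]

lemma mnorm1_restrict_add_restrict_compl (S : Finset (Fin N)) (v : Fin N → V) :
    mnorm1 (restrict S v) + mnorm1 (restrict Sᶜ v) = mnorm1 v := by
  rw [mnorm1_restrict, mnorm1_restrict, Finset.sum_add_sum_compl, mnorm1]

lemma mnorm1_restrict_le (S : Finset (Fin N)) (v : Fin N → V) :
    mnorm1 (restrict S v) ≤ mnorm1 v := by
  rw [mnorm1_restrict]
  exact Finset.sum_le_univ_sum_of_nonneg fun _ => norm_nonneg _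

lemma mnorm2_le_restrict_add_restrict_compl (S : Finset (Fin N)) (v : Fin N → V) :
    mnorm2 v ≤ mnorm2 (restrict S v) + mnorm2 (restrict Sᶜ v) := by
  simpa only [restrict_add_restrict_compl] using mnorm2_add_le (restrict S v) (restrict Sᶜ v)

lemma mnorm1_restrict_le_sqrt_card_mul_mnorm2 (S : Finset (Fin N)) (v : Fin N → V) :
    mnorm1 (restrict S v) ≤ √S.card * mnorm2 (restrict S v) := by
  rw [mnorm1_restrict, mnorm2_restrict, ← Real.sqrt_mul (Nat.cast_nonneg _)]
  exact Real.le_sqrt_of_sq_le (sq_sum_le_card_mul_sum_sq ..)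

lemma mnorm1_restrict_compl_sub_le (S : Finset (Fin N)) (c z : Fin N → V) :
    mnorm1 (restrict Sᶜ (z - c)) ≤
      mnorm1 z - mnorm1 c + 2 * mnorm1 (restrict Sᶜ c) + mnorm1 (restrict S (z - c)) := by
  have hS : ∑ j ∈ S, ‖c j‖ ≤ ∑ j ∈ S, ‖z j‖ + ∑ j ∈ S, ‖(z - c) j‖ := by
    rw [← Finset.sum_add_distrib]
    exact Finset.sum_le_sum fun j _ => by simpa using norm_le_norm_add_norm_sub (z j) (c j)
  have hSc : ∑ j ∈ Sᶜ, ‖(z - c) j‖ ≤ ∑ j ∈ Sᶜ, ‖z j‖ + ∑ j ∈ Sᶜ, ‖c j‖ := by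
    rw [← Finset.sum_add_distrib]
    exact Finset.sum_le_sum fun j _ => norm_sub_le (z j) (c j)
  rw [← mnorm1_restrict_add_restrict_compl S z, ← mnorm1_restrict_add_restrict_compl S c]
  simp only [mnorm1_restrict] at *
  linarith

lemma mnorm1_restrict_compl_le_of_eq_zero {S : Finset (Fin N)} {w : Fin N → V}
    (hw : ∀ j ∉ S, w j = 0) (c : Fin N → V) :
    mnorm1 (restrict Sᶜ c) ≤ mnorm1 (c - w) := by
  have : restrict Sᶜ c = restrict Sᶜ (c - w) := by
    ext j
    by_cases hj : j ∈ S <;> simp [restrict, hj, hw]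
  exact this ▸ mnorm1_restrict_le _ _

lemma sqrt_card_mul_mnorm2_restrict_compl_le (v : Fin N → V) (T : Finset (Fin N))
    (htop : ∀ i ∈ T, ∀ j ∉ T, ‖v j‖ ≤ ‖v i‖) :
    √T.card * mnorm2 (restrict Tᶜ v) ≤ mnorm1 v := by
  have hsmall : ∀ j ∉ T, T.card * ‖v j‖ ≤ mnorm1 v := fun j hj =>
    calc T.card * ‖v j‖ = ∑ _i ∈ T, ‖v j‖ := by rw [Finset.sum_const, nsmul_eq_mul]
      _ ≤ ∑ i ∈ T, ‖v i‖ := Finset.sum_le_sum fun i hi => htop i hi j hj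
      _ = mnorm1 (restrict T v) := (mnorm1_restrict T v).symm
      _ ≤ mnorm1 v := mnorm1_restrict_le T v
  have hsq : T.card * ∑ j ∈ Tᶜ, ‖v j‖ ^ 2 ≤ mnorm1 v ^ 2 :=
    calc T.card * ∑ j ∈ Tᶜ, ‖v j‖ ^ 2 = ∑ j ∈ Tᶜ, T.card * ‖v j‖ * ‖v j‖ := by
          rw [Finset.mul_sum]; simp only [sq, mul_assoc]
      _ ≤ ∑ j ∈ Tᶜ, mnorm1 v * ‖v j‖ := Finset.sum_le_sum fun j hj =>
          mul_le_mul_of_nonneg_right (hsmall j (Finset.mem_compl.mp hj)) (norm_nonneg _)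
      _ = mnorm1 v * mnorm1 (restrict Tᶜ v) := by rw [mnorm1_restrict, Finset.mul_sum]
      _ ≤ mnorm1 v ^ 2 := by
          rw [sq]; exact mul_le_mul_of_nonneg_left (mnorm1_restrict_le _ _) (mnorm1_nonneg v)
  rw [mnorm2_restrict, ← Real.sqrt_mul (Nat.cast_nonneg _)]
  exact Real.sqrt_le_iff.mpr ⟨mnorm1_nonneg v, hsq⟩

lemma exists_card_le_sqrt_mul_mnorm2_restrict_compl_le (s : ℕ) (v : Fin N → V) :
    ∃ T : Finset (Fin N), T.card ≤ s ∧ √s * mnorm2 (restrict Tᶜ v) ≤ mnorm1 v := by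
  rcases le_total s N with hsN | hNs
  · obtain ⟨T, hcard, htop⟩ :=
      Finset.exists_card_eq_forall_notMem_le (fun j => ‖v j‖) (hsN.trans (Fintype.card_fin N).ge)
    exact ⟨T, hcard.le, hcard ▸ sqrt_card_mul_mnorm2_restrict_compl_le v T htop⟩
  · refine ⟨Finset.univ, by simpa using hNs, ?_⟩
    simpa [mnorm2_restrict] using mnorm1_nonneg v

end MixedNorms

lemma le_add_mul_csInf {S : Set ℝ} (hS : S.Nonempty) {a b K : ℝ} (hK : 0 < K)
    (h : ∀ x ∈ S, a ≤ b + K * x) : a ≤ b + K * sInf S := by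
  have : (a - b) / K ≤ sInf S :=
    le_csInf hS fun x hx => by rw [div_le_iff₀' hK]; linarith [h x hx]
  rw [div_le_iff₀' hK] at this
  linarith

namespace RobustNSP

variable [NormedAddCommGroup V] [InnerProductSpace ℝ V] {m N s : ℕ}
  {A : Matrix (Fin m) (Fin N) ℝ} {ρ τ : ℝ}

lemma sqrt_mul_mnorm2_restrict_le (hNSP : RobustNSP V A s ρ τ) (hs : 0 < s) (v : Fin N → V)
    {S : Finset (Fin N)} (hS : S.card ≤ s) :
    √s * mnorm2 (restrict S v) ≤ ρ * mnorm1 (restrict Sᶜ v) + √s * τ * mnorm2 (matVec A v) := by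
  have hq : 0 < √(s : ℝ) := Real.sqrt_pos.mpr (Nat.cast_pos.mpr hs)
  calc √s * mnorm2 (restrict S v)
      ≤ √s * (ρ / √s * mnorm1 (restrict Sᶜ v) + τ * mnorm2 (matVec A v)) :=
        mul_le_mul_of_nonneg_left (hNSP v S hS) hq.le
    _ = ρ * mnorm1 (restrict Sᶜ v) + √s * τ * mnorm2 (matVec A v) := by
        field_simp

lemma mnorm1_restrict_le_of_card_le (hNSP : RobustNSP V A s ρ τ) (hs : 0 < s) (v : Fin N → V)
    {S : Finset (Fin N)} (hS : S.card ≤ s) :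
    mnorm1 (restrict S v) ≤ ρ * mnorm1 (restrict Sᶜ v) + √s * τ * mnorm2 (matVec A v) :=
  calc mnorm1 (restrict S v) ≤ √S.card * mnorm2 (restrict S v) :=
        mnorm1_restrict_le_sqrt_card_mul_mnorm2 S v
    _ ≤ √s * mnorm2 (restrict S v) := by gcongr; exact mnorm2_nonneg _
    _ ≤ _ := hNSP.sqrt_mul_mnorm2_restrict_le hs v hS

lemma one_sub_mul_mnorm1_sub_le (hNSP : RobustNSP V A s ρ τ) (hs : 0 < s) (hρ0 : 0 ≤ ρ)
    (c z : Fin N → V) {S : Finset (Fin N)} (hS : S.card ≤ s) :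
    (1 - ρ) * mnorm1 (z - c) ≤
      (1 + ρ) * (mnorm1 z - mnorm1 c + 2 * mnorm1 (restrict Sᶜ c)) +
        2 * √s * τ * mnorm2 (matVec A (z - c)) := by
  rw [← mnorm1_restrict_add_restrict_compl S (z - c)]
  have hcone := mul_le_mul_of_nonneg_left (mnorm1_restrict_compl_sub_le S c z)
    (by linarith : 0 ≤ 1 + ρ)
  have hnsp := hNSP.mnorm1_restrict_le_of_card_le hs (z - c) hS
  linarith

lemma sqrt_mul_mnorm2_le (hNSP : RobustNSP V A s ρ τ) (hs : 0 < s) (hρ0 : 0 ≤ ρ)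
    (v : Fin N → V) :
    √s * mnorm2 v ≤ (1 + ρ) * mnorm1 v + √s * τ * mnorm2 (matVec A v) := by
  obtain ⟨T, hT, htail⟩ := exists_card_le_sqrt_mul_mnorm2_restrict_compl_le s v
  have hhead := hNSP.sqrt_mul_mnorm2_restrict_le hs v hT
  have hsplit := mul_le_mul_of_nonneg_left (mnorm2_le_restrict_add_restrict_compl T v)
    (Real.sqrt_nonneg s)
  have := mul_le_mul_of_nonneg_left (mnorm1_restrict_le Tᶜ v) hρ0
  linarith

lemma mnorm2_sub_le (hNSP : RobustNSP V A s ρ τ) (hs : 0 < s) (hρ0 : 0 ≤ ρ) (hρ1 : ρ < 1)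
    (c z : Fin N → V) {S : Finset (Fin N)} (hS : S.card ≤ s) :
    mnorm2 (z - c) ≤
      (1 + ρ) ^ 2 / (1 - ρ) / √s * (mnorm1 z - mnorm1 c + 2 * mnorm1 (restrict Sᶜ c)) +
        (3 + ρ) * τ / (1 - ρ) * mnorm2 (matVec A (z - c)) := by
  have hq : 0 < √(s : ℝ) := Real.sqrt_pos.mpr (Nat.cast_pos.mpr hs)
  have h1ρ : 0 < 1 - ρ := sub_pos.mpr hρ1
  have hl1 := hNSP.one_sub_mul_mnorm1_sub_le hs hρ0 c z hS
  have hl2 := hNSP.sqrt_mul_mnorm2_le hs hρ0 (z - c)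
  set X := mnorm1 z - mnorm1 c + 2 * mnorm1 (restrict Sᶜ c)
  set e := mnorm2 (matVec A (z - c))
  have key : mnorm2 (z - c) * ((1 - ρ) * √s) ≤ (1 + ρ) ^ 2 * X + (3 + ρ) * √s * τ * e := by
    linarith [mul_le_mul_of_nonneg_left hl1 (by linarith : 0 ≤ 1 + ρ),
      mul_le_mul_of_nonneg_left hl2 h1ρ.le]
  calc mnorm2 (z - c) ≤ ((1 + ρ) ^ 2 * X + (3 + ρ) * √s * τ * e) / ((1 - ρ) * √s) :=
        (le_div_iff₀ (by positivity)).mpr key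
    _ = _ := by field_simp

end RobustNSP

theorem lV2_error_bound_of_robust_nsp_general
    [NormedAddCommGroup V] [InnerProductSpace ℝ V]
    {N m s : ℕ} (hs : 0 < s)
    (A : Matrix (Fin m) (Fin N) ℝ) (ρ τ : ℝ) (hρ0 : 0 < ρ) (hρ1 : ρ < 1)
    (hNSP : RobustNSP V A s ρ τ) (c z : Fin N → V) :
    mnorm2 (z - c) ≤
      (1 + ρ) ^ 2 / (1 - ρ) / Real.sqrt s *
          (mnorm1 z - mnorm1 c + 2 * sigmaS s c) +
        (3 + ρ) * τ / (1 - ρ) * mnorm2 (matVec A (z - c)) := by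
  set K := (1 + ρ) ^ 2 / (1 - ρ) / Real.sqrt s
  have hK : 0 < K := by
    have := sub_pos.mpr hρ1
    have : 0 < √(s : ℝ) := Real.sqrt_pos.mpr (Nat.cast_pos.mpr hs)
    positivity
  have hsparse : ((fun w => mnorm1 (c - w)) '' {w | IsSparse s w}).Nonempty :=
    ⟨_, 0, ⟨∅, by simp, fun _ _ => rfl⟩, rfl⟩
  have hbound := le_add_mul_csInf hsparse (mul_pos two_pos hK)
    (a := mnorm2 (z - c)) (b := K * (mnorm1 z - mnorm1 c) +
      (3 + ρ) * τ / (1 - ρ) * mnorm2 (matVec A (z - c))) <| by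
    rintro _ ⟨w, ⟨S, hS, hw⟩, rfl⟩
    have := hNSP.mnorm2_sub_le hs hρ0.le hρ1 c z hS
    have := mul_le_mul_of_nonneg_left (mnorm1_restrict_compl_le_of_eq_zero hw c) hK.le
    linarith
  rw [sigmaS]
  linarith

/-- error bound in `‖·‖_{V,2}` under the `ℓ_{V,2}`-robust NSP. -/
theorem lV2_error_bound_of_robust_nsp
    [NormedAddCommGroup V] [InnerProductSpace ℝ V] [CompleteSpace V]
    [TopologicalSpace.SeparableSpace V]
    {N m s : ℕ} (hN : 0 < N) (hm : 0 < m) (hs : 0 < s)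
    (A : Matrix (Fin m) (Fin N) ℝ) (ρ τ : ℝ) (hρ0 : 0 < ρ) (hρ1 : ρ < 1) (hτ : 0 < τ)
    (hNSP : RobustNSP V A s ρ τ) (c z : Fin N → V) :
    mnorm2 (z - c) ≤
      (1 + ρ) ^ 2 / (1 - ρ) / Real.sqrt s *
          (mnorm1 z - mnorm1 c + 2 * sigmaS s c) +
        (3 + ρ) * τ / (1 - ρ) * mnorm2 (matVec A (z - c)) :=
  lV2_error_bound_of_robust_nsp_general hs A ρ τ hρ0 hρ1 hNSP c z
end

section
/- Let V be a real Hilbert space, let N, m be positive integers, let A be an m×N real matrix, u ∈ V^m, and τ > 0. Define F : V^N → ℝ by F(z) := ‖z‖_{V,1} + (1/2)‖Az − u‖²_{V,2}, and define S_τ : V^N → V^N componentwise by S_τ(z)_j := J_τ((z − τA*(Az − u))_j), where J_τ is the soft-thresholding operator on V with threshold τ. Then x ∈ V^N minimizes F over V^N if and only if x is a fixed point of S_τ, i.e., S_τ(x) = x. -/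
open scoped BigOperators
open Filter

variable {V : Type*}

/-!
Write `F = g + f` with `g = ‖·‖_{V,1}` convex and `f(z) = ½‖Az − u‖²`, whose expansion
around `x` is `f(x + d) = f(x) + ⟪w, d⟫ + ½‖Ad‖²` with `w = A*(Ax − u)`. Convexity of `g`
and nonnegativity of the quadratic term make `x` a minimizer iff `−w` is a subgradient of `g`
at `x`, i.e. `‖x + d‖₁ − ‖x‖₁ + ⟪w, d⟫ ≥ 0` for all `d`. This condition splits into one
condition per coordinate, and there it says that `x_j` is a fixed point of
`y ↦ J_τ(y − τ w_j)`, because `J_τ` is the proximal map of `τ‖·‖`, characterised by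
`⟪y − J_τ y, v − J_τ y⟫ ≤ τ (‖v‖ − ‖J_τ y‖)`.
-/

open scoped RealInnerProductSpace Topology

section SoftThreshold

variable [NormedAddCommGroup V] [InnerProductSpace ℝ V]

theorem inner_sub_softThresh_le {τ : ℝ} (hτ : 0 ≤ τ) (y v : V) :
    ⟪y - softThresh τ y, v - softThresh τ y⟫ ≤ τ * (‖v‖ - ‖softThresh τ y‖) := by
  rcases le_or_gt ‖y‖ τ with hy | hy
  · have hp : softThresh τ y = 0 := by
      simp [softThresh, max_eq_right (sub_nonpos.mpr hy)]
    rw [hp, sub_zero, sub_zero, norm_zero, sub_zero]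
    calc ⟪y, v⟫ ≤ ‖y‖ * ‖v‖ := real_inner_le_norm y v
      _ ≤ τ * ‖v‖ := by gcongr
  · have hy0 : 0 < ‖y‖ := hτ.trans_lt hy
    set c := τ / ‖y‖
    have hp : softThresh τ y = (1 - c) • y := by
      rw [softThresh, max_eq_left (by linarith), sub_div, div_self hy0.ne']
    have hnorm : ‖softThresh τ y‖ = ‖y‖ - τ := by
      rw [hp, norm_smul, Real.norm_of_nonneg (by rw [sub_div' hy0.ne', one_mul]; positivity),
        sub_mul, one_mul, div_mul_cancel₀ _ hy0.ne']
    have hyp : ⟪y, softThresh τ y⟫ = ‖y‖ * (‖y‖ - τ) := by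
      rw [hp, real_inner_smul_right, real_inner_self_eq_norm_sq, sub_mul, one_mul,
        div_mul_eq_mul_div, sq, mul_div_assoc, mul_div_cancel_left₀ _ hy0.ne']
      ring
    have hyv : c * ⟪y, v⟫ ≤ τ * ‖v‖ := by
      calc c * ⟪y, v⟫ ≤ c * (‖y‖ * ‖v‖) := by gcongr; exact real_inner_le_norm y v
        _ = τ * ‖v‖ := by rw [← mul_assoc, div_mul_cancel₀ _ hy0.ne']
    have hsub : y - softThresh τ y = c • y := by rw [hp, sub_smul, one_smul, sub_sub_cancel]
    rw [hsub, real_inner_smul_left, inner_sub_right, hyp, hnorm, mul_sub,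
      ← mul_assoc, div_mul_cancel₀ _ hy0.ne']
    linarith

theorem softThresh_sub_smul_eq_self_iff {τ : ℝ} (hτ : 0 < τ) (x w : V) :
    softThresh τ (x - τ • w) = x ↔ ∀ v, 0 ≤ ‖x + v‖ - ‖x‖ + ⟪w, v⟫ := by
  constructor
  · intro hfix v
    have h := inner_sub_softThresh_le hτ.le (x - τ • w) (x + v)
    rw [hfix, sub_sub_cancel_left, add_sub_cancel_left, inner_neg_left,
      real_inner_smul_left] at h
    exact nonneg_of_mul_nonneg_right (by linarith) hτ
  · intro hsub
    set p := softThresh τ (x - τ • w)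
    have hprox := inner_sub_softThresh_le hτ.le (x - τ • w) x
    have hp := hsub (p - x)
    rw [add_sub_cancel] at hp
    have hexpand : ⟪x - τ • w - p, x - p⟫ = ‖x - p‖ ^ 2 + τ * ⟪w, p - x⟫ := by
      have hneg : ⟪w, x - p⟫ = -⟪w, p - x⟫ := by rw [← inner_neg_right, neg_sub]
      rw [sub_right_comm, inner_sub_left, real_inner_self_eq_norm_sq, real_inner_smul_left, hneg]
      ring
    rw [hexpand] at hprox
    have hxp : ‖x - p‖ ^ 2 ≤ 0 := by linarith [mul_nonneg hτ.le hp]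
    exact (by simpa [sub_eq_zero] using le_antisymm hxp (sq_nonneg _) : x = p).symm

end SoftThreshold

theorem forall_le_add_iff_of_convexOn {E : Type*} [AddCommGroup E] [Module ℝ E]
    {g : E → ℝ} (hg : ConvexOn ℝ Set.univ g) (f ℓ q : E → ℝ) (x : E)
    (hf : ∀ (t : ℝ) (d : E), f (x + t • d) = f x + t * ℓ d + t ^ 2 * q d)
    (hq : ∀ d, 0 ≤ q d) :
    (∀ z, g x + f x ≤ g z + f z) ↔ ∀ d, 0 ≤ g (x + d) - g x + ℓ d := by
  constructor
  · intro hmin d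
    have hseg : ∀ t ∈ Set.Ioc (0 : ℝ) 1, 0 ≤ g (x + d) - g x + ℓ d + t * q d := by
      rintro t ⟨ht0, ht1⟩
      have hconv : g (x + t • d) ≤ (1 - t) * g x + t * g (x + d) := by
        have h := hg.2 (Set.mem_univ x) (Set.mem_univ (x + d)) (sub_nonneg.mpr ht1) ht0.le
          (sub_add_cancel 1 t)
        rwa [smul_add, ← add_assoc, ← add_smul, sub_add_cancel, one_smul] at h
      have h := hmin (x + t • d)
      rw [hf] at h
      exact nonneg_of_mul_nonneg_right (by nlinarith) ht0
    have hlim : Tendsto (fun t : ℝ => g (x + d) - g x + ℓ d + t * q d) (𝓝[>] 0)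
        (𝓝 (g (x + d) - g x + ℓ d)) := by
      have hcont : Continuous fun t : ℝ => g (x + d) - g x + ℓ d + t * q d := by fun_prop
      simpa using (hcont.tendsto 0).mono_left nhdsWithin_le_nhds
    exact ge_of_tendsto hlim (eventually_of_mem (Ioc_mem_nhdsGT one_pos) hseg)
  · intro hvar z
    have h := hf 1 (z - x)
    rw [one_smul, add_sub_cancel, one_mul, one_pow, one_mul] at h
    have := hvar (z - x)
    rw [add_sub_cancel] at this
    linarith [hq (z - x)]

theorem forall_sum_nonneg_iff {ι : Type*} [Fintype ι] [DecidableEq ι] {β : ι → Type*}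
    [∀ i, Zero (β i)] (φ : ∀ i, β i → ℝ) (hφ : ∀ i, φ i 0 = 0) :
    (∀ d : ∀ i, β i, 0 ≤ ∑ i, φ i (d i)) ↔ ∀ i v, 0 ≤ φ i v := by
  refine ⟨fun h i v => ?_, fun h d => Finset.sum_nonneg fun i _ => h i (d i)⟩
  have hsingle := h (Pi.single i v)
  rwa [Finset.sum_eq_single i (fun k _ hk => by rw [Pi.single_eq_of_ne hk, hφ])
    (fun hi => absurd (Finset.mem_univ i) hi), Pi.single_eq_same] at hsingle

section MixedNorms

variable [NormedAddCommGroup V]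

theorem convexOn_mnorm1 [NormedSpace ℝ V] {N : ℕ} :
    ConvexOn ℝ Set.univ (mnorm1 : (Fin N → V) → ℝ) := by
  refine ⟨convex_univ, fun x _ y _ a b ha hb hab => ?_⟩
  simp only [mnorm1, smul_eq_mul, Finset.mul_sum, ← Finset.sum_add_distrib]
  gcongr with j
  exact convexOn_univ_norm.2 trivial trivial ha hb hab

theorem mnorm2_sq {M : ℕ} (v : Fin M → V) : mnorm2 v ^ 2 = ∑ i, ‖v i‖ ^ 2 :=
  Real.sq_sqrt (Finset.sum_nonneg fun _ _ => sq_nonneg _)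

theorem matVec_add_smul [Module ℝ V] {m N : ℕ} (A : Matrix (Fin m) (Fin N) ℝ)
    (x d : Fin N → V) (t : ℝ) : matVec A (x + t • d) = matVec A x + t • matVec A d := by
  ext i
  simp [matVec, smul_add, Finset.sum_add_distrib, Finset.smul_sum, smul_comm t]

variable [InnerProductSpace ℝ V]

theorem mnorm2_add_smul_sq {M : ℕ} (b e : Fin M → V) (t : ℝ) :
    mnorm2 (b + t • e) ^ 2 =
      mnorm2 b ^ 2 + 2 * t * ∑ i, ⟪b i, e i⟫ + t ^ 2 * mnorm2 e ^ 2 := by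
  simp only [mnorm2_sq, Pi.add_apply, Pi.smul_apply, norm_add_sq_real, real_inner_smul_right,
    norm_smul, Real.norm_eq_abs, mul_pow, sq_abs, Finset.sum_add_distrib, Finset.mul_sum]
  ring_nf

theorem sum_inner_matVecT {m N : ℕ} (A : Matrix (Fin m) (Fin N) ℝ) (v : Fin m → V)
    (d : Fin N → V) : ∑ j, ⟪matVecT A v j, d j⟫ = ∑ i, ⟪v i, matVec A d i⟫ := by
  simp only [matVecT, matVec, sum_inner, inner_sum, real_inner_smul_left, real_inner_smul_right]
  exact Finset.sum_comm

theorem half_mnorm2_matVec_sub_sq_add_smul {m N : ℕ} (A : Matrix (Fin m) (Fin N) ℝ)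
    (u : Fin m → V) (x : Fin N → V) (t : ℝ) (d : Fin N → V) :
    (1 / 2) * mnorm2 (matVec A (x + t • d) - u) ^ 2 =
      (1 / 2) * mnorm2 (matVec A x - u) ^ 2 +
        t * ∑ j, ⟪matVecT A (matVec A x - u) j, d j⟫ +
          t ^ 2 * ((1 / 2) * mnorm2 (matVec A d) ^ 2) := by
  rw [matVec_add_smul, add_sub_right_comm, mnorm2_add_smul_sq, sum_inner_matVecT]
  ring

end MixedNorms

theorem minimizer_iff_fixed_point_general
    [NormedAddCommGroup V] [InnerProductSpace ℝ V]
    {N m : ℕ}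
    (A : Matrix (Fin m) (Fin N) ℝ) (u : Fin m → V) (τ : ℝ) (hτ : 0 < τ)
    (x : Fin N → V) :
    (∀ z : Fin N → V,
        mnorm1 x + (1 / 2) * mnorm2 (matVec A x - u) ^ 2 ≤
          mnorm1 z + (1 / 2) * mnorm2 (matVec A z - u) ^ 2) ↔
      Sop τ A u x = x := by
  classical
  set w := matVecT A (matVec A x - u)
  have hsplit : ∀ d : Fin N → V, mnorm1 (x + d) - mnorm1 x + ∑ j, ⟪w j, d j⟫ =
      ∑ j, (‖x j + d j‖ - ‖x j‖ + ⟪w j, d j⟫) := by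
    intro d
    simp only [mnorm1, Pi.add_apply, Finset.sum_add_distrib, Finset.sum_sub_distrib]
  rw [forall_le_add_iff_of_convexOn convexOn_mnorm1
      (fun z => (1 / 2) * mnorm2 (matVec A z - u) ^ 2) (fun d => ∑ j, ⟪w j, d j⟫)
      (fun d => (1 / 2) * mnorm2 (matVec A d) ^ 2) x
      (half_mnorm2_matVec_sub_sq_add_smul A u x) (fun d => by positivity)]
  simp only [hsplit]
  rw [forall_sum_nonneg_iff (fun j v => ‖x j + v‖ - ‖x j‖ + ⟪w j, v⟫) (fun _ => by simp),
    funext_iff]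
  exact forall_congr' fun j => (softThresh_sub_smul_eq_self_iff hτ (x j) (w j)).symm

/-- `x` minimizes `F(z) = ‖z‖_{V,1} + (1/2)‖Az − u‖²_{V,2}` iff `x` is a fixed
point of the forward-backward operator `S_τ`. -/
theorem minimizer_iff_fixed_point
    [NormedAddCommGroup V] [InnerProductSpace ℝ V] [CompleteSpace V]
    {N m : ℕ} (hN : 0 < N) (hm : 0 < m)
    (A : Matrix (Fin m) (Fin N) ℝ) (u : Fin m → V) (τ : ℝ) (hτ : 0 < τ)
    (x : Fin N → V) :
    (∀ z : Fin N → V,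
        mnorm1 x + (1 / 2) * mnorm2 (matVec A x - u) ^ 2 ≤
          mnorm1 z + (1 / 2) * mnorm2 (matVec A z - u) ^ 2) ↔
      Sop τ A u x = x :=
  minimizer_iff_fixed_point_general A u τ hτ x
end

section
/- Let V be a real Hilbert space, let N, m be positive integers, let A be an m×N real matrix, u ∈ V^m, and μ > 0. Then the convex functional F(z) := ‖z‖_{V,1} + (μ/2)‖Az − u‖²_{V,2} attains its minimum over V^N; that is, there exists x* ∈ V^N with F(x*) ≤ F(z) for all z ∈ V^N. -/
/-!
Projecting every component of `z` orthogonally onto the finite-dimensional span `K` of the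
entries of `u` does not increase `‖z‖_{V,1}`, and, since the projection commutes with `A` and
fixes `u`, it does not increase `‖Az − u‖_{V,2}` either. So it suffices to minimise over `K^N`,
where the functional is continuous and coercive (it dominates `‖z‖_{V,1}`) on a
finite-dimensional space, hence attains its minimum.
-/

open scoped BigOperators
open Filter

variable {V : Type*}

section MixedNorms

variable {W : Type*} [NormedAddCommGroup V] [NormedAddCommGroup W] {n : ℕ}

lemma norm_le_mnorm1 (z : Fin n → V) : ‖z‖ ≤ mnorm1 z :=
  (pi_norm_le_iff_of_nonneg (Finset.sum_nonneg fun _ _ => norm_nonneg _)).2 fun i =>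
    Finset.single_le_sum (f := fun j => ‖z j‖) (fun _ _ => norm_nonneg _) (Finset.mem_univ i)

lemma continuous_mnorm1 : Continuous (mnorm1 : (Fin n → V) → ℝ) :=
  continuous_finsetSum _ fun j _ => (continuous_apply j).norm

lemma continuous_mnorm2 : Continuous (mnorm2 : (Fin n → V) → ℝ) :=
  Real.continuous_sqrt.comp <|
    continuous_finsetSum _ fun j _ => ((continuous_apply j).norm).pow 2

lemma mnorm1_comp_le {f : V → W} (hf : ∀ v, ‖f v‖ ≤ ‖v‖) (z : Fin n → V) :
    mnorm1 (f ∘ z) ≤ mnorm1 z :=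
  Finset.sum_le_sum fun j _ => hf (z j)

lemma mnorm2_comp_le {f : V → W} (hf : ∀ v, ‖f v‖ ≤ ‖v‖) (z : Fin n → V) :
    mnorm2 (f ∘ z) ≤ mnorm2 z :=
  Real.sqrt_le_sqrt <| Finset.sum_le_sum fun j _ =>
    pow_le_pow_left₀ (norm_nonneg _) (hf (z j)) 2

end MixedNorms

section Functional

variable {m N : ℕ}

noncomputable def l1LeastSquares [NormedAddCommGroup V] [Module ℝ V]
    (A : Matrix (Fin m) (Fin N) ℝ) (u : Fin m → V) (μ : ℝ) (z : Fin N → V) : ℝ :=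
  mnorm1 z + (μ / 2) * mnorm2 (matVec A z - u) ^ 2

variable [NormedAddCommGroup V] [NormedSpace ℝ V]
  (A : Matrix (Fin m) (Fin N) ℝ) (u : Fin m → V) {μ : ℝ}

lemma matVec_comp_linearMap {W : Type*} [NormedAddCommGroup W] [Module ℝ W]
    (L : V →ₗ[ℝ] W) (z : Fin N → V) : matVec A (L ∘ z) = L ∘ matVec A z := by
  ext i
  simp only [matVec, Function.comp_apply, map_sum, map_smul]

lemma continuous_matVec : Continuous (matVec A : (Fin N → V) → Fin m → V) :=
  continuous_pi fun _ => continuous_finsetSum _ fun j _ => (continuous_apply j).const_smul _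

lemma continuous_l1LeastSquares : Continuous (l1LeastSquares A u μ) :=
  continuous_mnorm1.add <| continuous_const.mul <|
    (continuous_mnorm2.comp ((continuous_matVec A).sub continuous_const)).pow 2

lemma l1LeastSquares_comp_le (hμ : 0 ≤ μ) (L : V →ₗ[ℝ] V) (hL : ∀ v, ‖L v‖ ≤ ‖v‖)
    (hLu : ∀ i, L (u i) = u i) (z : Fin N → V) :
    l1LeastSquares A u μ (L ∘ z) ≤ l1LeastSquares A u μ z := by
  have hres : matVec A (L ∘ z) - u = L ∘ (matVec A z - u) := by
    ext i
    simp only [matVec_comp_linearMap, Pi.sub_apply, Function.comp_apply, map_sub, hLu]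
  unfold l1LeastSquares
  rw [hres]
  gcongr ?_ + _ * ?_ ^ 2
  · exact mnorm1_comp_le hL z
  · exact Real.sqrt_nonneg _
  · exact mnorm2_comp_le hL _

lemma exists_forall_l1LeastSquares_le_of_finiteDimensional (hμ : 0 ≤ μ)
    (K : Submodule ℝ V) [FiniteDimensional ℝ K] :
    ∃ w : Fin N → K, ∀ w' : Fin N → K,
      l1LeastSquares A u μ (K.subtype ∘ w) ≤ l1LeastSquares A u μ (K.subtype ∘ w') := by
  have hcont : Continuous fun w : Fin N → K => l1LeastSquares A u μ (K.subtype ∘ w) :=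
    (continuous_l1LeastSquares A u).comp
      (continuous_pi fun j => continuous_subtype_val.comp (continuous_apply j))
  refine hcont.exists_forall_le (tendsto_atTop_mono (fun w => ?_) tendsto_norm_cocompact_atTop)
  calc ‖w‖ ≤ mnorm1 w := norm_le_mnorm1 w
    _ = mnorm1 (K.subtype ∘ w) := rfl
    _ ≤ l1LeastSquares A u μ (K.subtype ∘ w) := le_add_of_nonneg_right (by positivity)

end Functional

theorem functional_attains_minimum_general
    [NormedAddCommGroup V] [InnerProductSpace ℝ V]
    {N m : ℕ}
    (A : Matrix (Fin m) (Fin N) ℝ) (u : Fin m → V) (μ : ℝ) (hμ : 0 < μ) :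
    ∃ xstar : Fin N → V, ∀ z : Fin N → V,
      mnorm1 xstar + (μ / 2) * mnorm2 (matVec A xstar - u) ^ 2 ≤
        mnorm1 z + (μ / 2) * mnorm2 (matVec A z - u) ^ 2 := by
  let K : Submodule ℝ V := Submodule.span ℝ (Set.range u)
  have : FiniteDimensional ℝ K := FiniteDimensional.span_of_finite ℝ (Set.finite_range u)
  let P : V →ₗ[ℝ] V := K.starProjection
  have hPu : ∀ i, P (u i) = u i := fun i =>
    K.starProjection_eq_self_iff.2 (Submodule.subset_span ⟨i, rfl⟩)
  obtain ⟨w, hw⟩ := exists_forall_l1LeastSquares_le_of_finiteDimensional A u hμ.le K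
  refine ⟨K.subtype ∘ w, fun z => ?_⟩
  calc l1LeastSquares A u μ (K.subtype ∘ w)
      ≤ l1LeastSquares A u μ (K.subtype ∘ fun j => K.orthogonalProjectionOnto (z j)) := hw _
    _ = l1LeastSquares A u μ (P ∘ z) := rfl
    _ ≤ l1LeastSquares A u μ z :=
      l1LeastSquares_comp_le A u hμ.le P K.norm_starProjection_apply_le hPu z

/-- the functional `F(z) = ‖z‖_{V,1} + (μ/2)‖Az − u‖²_{V,2}` attains its
minimum over `V^N`. -/
theorem functional_attains_minimum
    [NormedAddCommGroup V] [InnerProductSpace ℝ V] [CompleteSpace V]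
    {N m : ℕ} (hN : 0 < N) (hm : 0 < m)
    (A : Matrix (Fin m) (Fin N) ℝ) (u : Fin m → V) (μ : ℝ) (hμ : 0 < μ) :
    ∃ xstar : Fin N → V, ∀ z : Fin N → V,
      mnorm1 xstar + (μ / 2) * mnorm2 (matVec A xstar - u) ^ 2 ≤
        mnorm1 z + (μ / 2) * mnorm2 (matVec A z - u) ^ 2 :=
  functional_attains_minimum_general A u μ hμ
end
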